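/- Let p be a prime, m a positive integer coprime to p, d ≤ p a positive integer, and let σ, τ be d×d matrices over a field k of characteristic p containing the m-th roots of unity, with σ the upper-triangular Jordan block with 1's on the diagonal and superdiagonal, τ upper triangular with diagonal entries ξ_1,...,ξ_d, and σ = τ⁻¹ σ^a τ for an integer a invertible mod p. Then ξ_{i+1} = ξ_i · a⁻¹ for all 1 ≤ i ≤ d-1, where a⁻¹ is interpreted via the image of a in k (note a is a unit in k since char k = p and p ∤ a). In particular ξ_i = ξ_1 · a^{-(i-1)}. -/
import Mathlib

private lemma two_term_sum {k : Type*} [Field k] {d : ℕ} (f : Fin d → k) (i j : Fin d)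
    (hij : i ≠ j) (hz : ∀ l : Fin d, l ≠ i → l ≠ j → f l = 0) :
    ∑ l, f l = f i + f j := by
  rw [← Finset.sum_pair hij]
  refine (Finset.sum_subset (Finset.subset_univ _) ?_).symm
  intro x _ hx
  simp only [Finset.mem_insert, Finset.mem_singleton, not_or] at hx
  exact hz x hx.1 hx.2

private lemma one_term_sum {k : Type*} [Field k] {d : ℕ} (f : Fin d → k) (i : Fin d)
    (hz : ∀ l : Fin d, l ≠ i → f l = 0) :
    ∑ l, f l = f i :=
  Finset.sum_eq_single_of_mem i (Finset.mem_univ i) (fun l _ hl => hz l hl)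

private lemma matS_pow {k : Type*} [Field k] {d : ℕ} (n : ℕ) :
    (∀ i j : Fin d, (j : ℕ) < i →
      ((Matrix.of (fun i j : Fin d => if (i : ℕ) = j ∨ (i : ℕ) + 1 = j then (1:k) else 0)) ^ n) i j = 0) ∧
    (∀ i : Fin d,
      ((Matrix.of (fun i j : Fin d => if (i : ℕ) = j ∨ (i : ℕ) + 1 = j then (1:k) else 0)) ^ n) i i = 1) ∧
    (∀ i j : Fin d, (i : ℕ) + 1 = j →
      ((Matrix.of (fun i j : Fin d => if (i : ℕ) = j ∨ (i : ℕ) + 1 = j then (1:k) else 0)) ^ n) i j = n) := by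
  set S : Matrix (Fin d) (Fin d) k :=
    Matrix.of (fun i j : Fin d => if (i : ℕ) = j ∨ (i : ℕ) + 1 = j then (1:k) else 0) with hS
  induction n with
  | zero =>
    refine ⟨fun i j h => ?_, fun i => ?_, fun i j h => ?_⟩
    · rw [pow_zero, Matrix.one_apply_ne (by intro he; subst he; omega)]
    · rw [pow_zero, Matrix.one_apply_eq]
    · rw [pow_zero, Matrix.one_apply_ne (by intro he; subst he; omega)]
      simp
  | succ n ih =>
    obtain ⟨h0, h1, h2⟩ := ih
    have key : ∀ i j : Fin d, (S ^ (n+1)) i j =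
        (S ^ n) i j + (if h : 0 < (j : ℕ) then
          (S ^ n) i ⟨(j:ℕ)-1, lt_of_le_of_lt (Nat.sub_le _ _) j.isLt⟩ else 0) := by
      intro i j
      rw [pow_succ, Matrix.mul_apply]
      split_ifs with h
      · set j' : Fin d := ⟨(j:ℕ)-1, lt_of_le_of_lt (Nat.sub_le _ _) j.isLt⟩ with hj'
        have hne : (j : Fin d) ≠ j' := by
          intro he
          have hv : (j : ℕ) = (j' : ℕ) := congrArg Fin.val he
          have hv2 : (j' : ℕ) = (j : ℕ) - 1 := rfl
          omega
        rw [show (∑ l, (S^n) i l * S l j) = (S^n) i j * S j j + (S^n) i j' * S j' j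
          from two_term_sum _ j j' hne ?_]
        · have e1 : S j j = 1 := by simp [hS]
          have e2 : S j' j = 1 := by
            simp only [hS, Matrix.of_apply]
            rw [if_pos]
            right
            have : (j' : ℕ) = (j : ℕ) - 1 := rfl
            omega
          rw [e1, e2, mul_one, mul_one]
        · intro l hl1 hl2
          have : S l j = 0 := by
            simp only [hS, Matrix.of_apply]
            rw [if_neg]
            push_neg
            constructor
            · intro he; exact hl1 (Fin.ext he)
            · intro he; apply hl2; apply Fin.ext
              have : (j' : ℕ) = (j : ℕ) - 1 := rfl
              omega
          rw [this, mul_zero]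
      · rw [show (∑ l, (S^n) i l * S l j) = (S^n) i j * S j j
          from one_term_sum _ j ?_]
        · have e1 : S j j = 1 := by simp [hS]
          rw [e1, mul_one, add_zero]
        · intro l hl
          have : S l j = 0 := by
            simp only [hS, Matrix.of_apply]
            rw [if_neg]
            push_neg
            constructor
            · intro he; exact hl (Fin.ext he)
            · omega
          rw [this, mul_zero]
    refine ⟨fun i j h => ?_, fun i => ?_, fun i j h => ?_⟩
    · rw [key]
      split_ifs with hj
      · rw [h0 i j h, h0 i _ (by simp; omega), add_zero]
      · rw [h0 i j h, add_zero]
    · rw [key]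
      split_ifs with hj
      · rw [h1 i, h0 i _ (by simp; omega), add_zero]
      · rw [h1 i, add_zero]
    · rw [key]
      have hj : 0 < (j : ℕ) := by omega
      have he : (⟨(j:ℕ)-1, lt_of_le_of_lt (Nat.sub_le _ _) j.isLt⟩ : Fin d) = i :=
        Fin.ext (by simp; omega)
      rw [dif_pos hj, h2 i j h, he, h1 i]
      push_cast
      ring

theorem stmt_12 (k : Type*) [Field k] (p m d : ℕ) (hp : p.Prime) [CharP k p]
    (hm : Nat.Coprime m p) (hroots : ∃ ζ : k, IsPrimitiveRoot ζ m)
    (hd : 0 < d) (hdp : d ≤ p) (a : ℕ) (ha : ¬ p ∣ a)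
    (σ τ : Matrix (Fin d) (Fin d) k)
    (hσ : σ = Matrix.of (fun i j : Fin d => if (i : ℕ) = j ∨ (i : ℕ) + 1 = j then 1 else 0))
    (hτtri : ∀ i j : Fin d, (j : ℕ) < (i : ℕ) → τ i j = 0)
    (hτunit : IsUnit τ.det)
    (hrel : σ = τ⁻¹ * σ ^ a * τ) :
    (∀ i j : Fin d, (i : ℕ) + 1 = (j : ℕ) → τ j j = τ i i * ((a : k))⁻¹) ∧
    (∀ i : Fin d, τ i i = τ ⟨0, hd⟩ ⟨0, hd⟩ * (((a : k))⁻¹) ^ (i : ℕ)) := by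
  have hak : (a : k) ≠ 0 := by
    rw [Ne, CharP.cast_eq_zero_iff k p]; exact ha
  have key : τ * σ = σ ^ a * τ := by
    conv_lhs => rw [hrel]
    rw [← mul_assoc, ← mul_assoc, Matrix.mul_nonsing_inv τ hτunit, one_mul]
  obtain ⟨h0, h1, h2⟩ := matS_pow (k := k) (d := d) a
  rw [← hσ] at h0 h1 h2
  have part1 : ∀ i j : Fin d, (i : ℕ) + 1 = (j : ℕ) → τ j j = τ i i * ((a : k))⁻¹ := by
    intro i j hij
    have hne : i ≠ j := by intro he; subst he; omega
    have hentry := congrArg (fun M => M i j) key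
    have lhs : (τ * σ) i j = τ i i + τ i j := by
      rw [Matrix.mul_apply]
      rw [two_term_sum _ i j hne ?_]
      · have e1 : σ i j = 1 := by rw [hσ]; simp only [Matrix.of_apply]; rw [if_pos (Or.inr hij)]
        have e2 : σ j j = 1 := by rw [hσ]; simp
        rw [e1, e2, mul_one, mul_one]
      · intro l hl1 hl2
        have : σ l j = 0 := by
          rw [hσ]; simp only [Matrix.of_apply]
          rw [if_neg]
          push_neg
          constructor
          · intro he; exact hl2 (Fin.ext he)
          · intro he; exact hl1 (Fin.ext (by omega))
        rw [this, mul_zero]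
    have rhs : (σ ^ a * τ) i j = τ i j + (a : k) * τ j j := by
      rw [Matrix.mul_apply]
      rw [two_term_sum _ i j hne ?_]
      · rw [h1 i, h2 i j hij, one_mul]
      · intro l hl1 hl2
        rcases lt_or_ge (l : ℕ) (i : ℕ) with h | h
        · rw [h0 i l h, zero_mul]
        · have : (j : ℕ) < (l : ℕ) := by
            rcases Nat.lt_or_ge (j : ℕ) (l : ℕ) with h' | h'
            · exact h'
            · exfalso
              have hor : (l : ℕ) = (i : ℕ) ∨ (l : ℕ) = (j : ℕ) := by omega
              rcases hor with h'' | h''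
              · exact hl1 (Fin.ext h'')
              · exact hl2 (Fin.ext h'')
          rw [hτtri l j this, mul_zero]
    rw [lhs, rhs] at hentry
    have : τ i i = (a : k) * τ j j := by linear_combination hentry
    rw [eq_mul_inv_iff_mul_eq₀ hak, this]; ring
  refine ⟨part1, ?_⟩
  have H : ∀ n (hn : n < d), τ ⟨n, hn⟩ ⟨n, hn⟩ = τ ⟨0, hd⟩ ⟨0, hd⟩ * ((a : k)⁻¹) ^ n := by
    intro n
    induction n with
    | zero => intro hn; simp
    | succ n ih =>
      intro hn
      have hn' : n < d := by omega
      rw [part1 ⟨n, hn'⟩ ⟨n + 1, hn⟩ rfl, ih hn', pow_succ, mul_assoc]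
  intro i
  have := H i.val i.isLt
  simpa using this
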